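/- For all λ > 0 and r ≥ 0, ∫_r^∞ (2r/h²) · (8/3)π²λ^{5/2} h⁴ e^{−λπh²} dh = (4λπ r/3) · ( erfc(r√(λπ)) + 2r√λ e^{−λπ r²} ), where erfc(z) := (2/√π) ∫_z^∞ e^{−u²} du. That is, if H has density (8/3)π²λ^{5/2}h⁴e^{−λπh²} on [0,∞) and, given H = h, R has conditional density 2r/h² on [0, h], then the marginal density of R is f(r) = (4λπr/3)(erfc(r√(λπ)) + 2r√λ e^{−λπr²}). -/

import Mathlib

/-!
Since `(2r/h²) h⁴ = 2r h²`, the integral is `(16/3)π²λ^{5/2} r ∫_r^∞ h² e^{−ah²} dh` with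
`a = λπ`. Integrating `d/dh (h e^{−ah²}) = e^{−ah²} − 2a h² e^{−ah²}` over `(r, ∞)` gives
`2a ∫_r^∞ h² e^{−ah²} dh = r e^{−ar²} + ∫_r^∞ e^{−ah²} dh`, and the substitution `u = √a h`
turns the last integral into `√π/(2√a) · erfc(r√a)`.
-/

open MeasureTheory Set

/-- The complementary error function `erfc(z) = (2/√π) ∫_z^∞ e^{−u²} du`. -/
noncomputable def erfc (z : ℝ) : ℝ := 2 / Real.sqrt Real.pi * ∫ u in Set.Ioi z, Real.exp (-u ^ 2)

open Filter Topology Real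

lemma div_mul_sq_self {K : Type*} [Field K] (c x : K) : c / x * x ^ 2 = c * x := by
  rcases eq_or_ne x 0 with rfl | hx
  · simp
  · field_simp

lemma integral_Ioi_exp_neg_mul_sq {a : ℝ} (ha : 0 < a) (r : ℝ) :
    ∫ h in Ioi r, exp (-(a * h ^ 2)) = √π / (2 * √a) * erfc (r * √a) := by
  have hsa : 0 < √a := sqrt_pos.2 ha
  have hsq : ∀ h : ℝ, a * h ^ 2 = (√a * h) ^ 2 := fun h => by rw [mul_pow, sq_sqrt ha.le]
  simp_rw [hsq]
  rw [integral_comp_mul_left_Ioi (fun u => exp (-u ^ 2)) r hsa, erfc, smul_eq_mul, mul_comm r]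
  field_simp

lemma hasDerivAt_mul_exp_neg_mul_sq (a x : ℝ) :
    HasDerivAt (fun h => h * exp (-(a * h ^ 2)))
      (exp (-(a * x ^ 2)) - 2 * a * (x ^ 2 * exp (-(a * x ^ 2)))) x := by
  have hexp : HasDerivAt (fun h => exp (-(a * h ^ 2))) (exp (-(a * x ^ 2)) * -(a * (2 * x))) x :=
    (((hasDerivAt_pow 2 x).const_mul a).neg.congr_deriv (by norm_num)).exp
  exact ((hasDerivAt_id' x).mul hexp).congr_deriv (by ring)

lemma tendsto_mul_exp_neg_mul_sq_atTop {a : ℝ} (ha : 0 < a) :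
    Tendsto (fun h => h * exp (-(a * h ^ 2))) atTop (𝓝 0) := by
  refine ((tendsto_rpow_abs_mul_exp_neg_mul_sq_cocompact ha 1).mono_left
    atTop_le_cocompact).congr' ?_
  filter_upwards [eventually_gt_atTop 0] with h hh
  rw [abs_of_pos hh, rpow_one, neg_mul]

lemma integrable_sq_mul_exp_neg_mul_sq {a : ℝ} (ha : 0 < a) :
    Integrable fun h : ℝ => h ^ 2 * exp (-(a * h ^ 2)) := by
  simpa [← neg_mul] using integrable_rpow_mul_exp_neg_mul_sq ha (s := 2) (by norm_num)

lemma integral_Ioi_sq_mul_exp_neg_mul_sq {a : ℝ} (ha : 0 < a) (r : ℝ) :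
    2 * a * ∫ h in Ioi r, h ^ 2 * exp (-(a * h ^ 2)) =
      r * exp (-(a * r ^ 2)) + ∫ h in Ioi r, exp (-(a * h ^ 2)) := by
  have hE : Integrable fun h : ℝ => exp (-(a * h ^ 2)) := by
    simpa [neg_mul] using integrable_exp_neg_mul_sq ha
  have hE2 := (integrable_sq_mul_exp_neg_mul_sq ha).const_mul (2 * a)
  have hFTC := integral_Ioi_of_hasDerivAt_of_tendsto' (a := r)
    (fun x _ => hasDerivAt_mul_exp_neg_mul_sq a x) (hE.sub hE2).integrableOn
    (tendsto_mul_exp_neg_mul_sq_atTop ha)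
  rw [integral_sub hE.integrableOn hE2.integrableOn, integral_const_mul] at hFTC
  linarith

lemma rpow_five_halves {x : ℝ} (hx : 0 ≤ x) : x ^ ((5 : ℝ) / 2) = x ^ 2 * √x := by
  rw [show (5 : ℝ) / 2 = (2 : ℕ) + 1 / 2 by norm_num, rpow_add' hx (by norm_num), rpow_natCast,
    sqrt_eq_rpow]

theorem stmt_13_general (lam r : ℝ) (hlam : 0 < lam) :
    (∫ h in Ioi r,
        2 * r / h ^ 2 *
          (8/3 * Real.pi ^ 2 * lam ^ ((5:ℝ)/2) * h ^ 4 * Real.exp (-(lam * Real.pi * h ^ 2)))) =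
      4 * lam * Real.pi * r / 3 *
        (erfc (r * Real.sqrt (lam * Real.pi)) +
          2 * r * Real.sqrt lam * Real.exp (-(lam * Real.pi * r ^ 2))) := by
  have ha : 0 < lam * π := mul_pos hlam pi_pos
  have hintegrand : ∀ h : ℝ, 2 * r / h ^ 2 *
      (8/3 * π ^ 2 * lam ^ ((5:ℝ)/2) * h ^ 4 * exp (-(lam * π * h ^ 2))) =
      16/3 * π ^ 2 * lam ^ ((5:ℝ)/2) * r * (h ^ 2 * exp (-(lam * π * h ^ 2))) := fun h => by
    have := div_mul_sq_self (2 * r) (h ^ 2)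
    rw [← pow_mul] at this
    linear_combination (8/3 * π ^ 2 * lam ^ ((5:ℝ)/2) * exp (-(lam * π * h ^ 2))) * this
  have hmoment := integral_Ioi_sq_mul_exp_neg_mul_sq ha r
  rw [integral_Ioi_exp_neg_mul_sq ha, mul_comm] at hmoment
  simp_rw [hintegrand]
  rw [integral_const_mul, eq_div_of_mul_eq (by positivity) hmoment, rpow_five_halves hlam.le,
    sqrt_mul hlam.le]
  have hsl : 0 < √lam := sqrt_pos.2 hlam
  have hsπ : 0 < √π := sqrt_pos.2 pi_pos
  field_simp
  ring

/-- Marginal density of the serving distance at a typical min-interference epoch: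
if `H` has density `(8/3)π²λ^{5/2}h⁴e^{−λπh²}` on `[0,∞)` and, given `H = h`, `R` has
conditional density `2r/h²` on `[0,h]`, then
`∫_r^∞ (2r/h²) · (8/3)π²λ^{5/2} h⁴ e^{−λπh²} dh
  = (4λπr/3)(erfc(r√(λπ)) + 2r√λ e^{−λπr²})`. -/
theorem stmt_13 (lam r : ℝ) (hlam : 0 < lam) (hr : 0 ≤ r) :
    (∫ h in Ioi r,
        2 * r / h ^ 2 *
          (8/3 * Real.pi ^ 2 * lam ^ ((5:ℝ)/2) * h ^ 4 * Real.exp (-(lam * Real.pi * h ^ 2)))) =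
      4 * lam * Real.pi * r / 3 *
        (erfc (r * Real.sqrt (lam * Real.pi)) +
          2 * r * Real.sqrt lam * Real.exp (-(lam * Real.pi * r ^ 2))) :=
  stmt_13_general lam r hlam
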